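/- arXiv:2605.28251 — 2 statements merged into one kernel-verified Lean document; each statement's English description precedes it below -/
import Mathlib

section
/- Let μ and ν be probability measures on ℝ, both supported on a compact set of diameter 2M (i.e., supported in an interval of length 2M). Then the squared Wasserstein-2 distance satisfies W₂²(μ, ν) ≤ 4M² · sup_{t ∈ ℝ} |F_μ(t) − F_ν(t)|, where F_μ and F_ν are the cumulative distribution functions of μ and ν. -/
/-!
Since the quantile functions `Q_μ, Q_ν` of measures supported in `[-M, M]` take values there on
`(0, 1)`, we have `(Q_μ - Q_ν)² ≤ 2M |Q_μ - Q_ν|`. By the Galois connection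
`Q(u) ≤ x ↔ u ≤ F(x)`, the integral of `|Q_μ - Q_ν|` over `(0, 1)` and the integral of
`|F_μ - F_ν|` over `ℝ` are the two iterated integrals computing the area of the region between
the graphs of `F_μ` and `F_ν`, so they agree by Tonelli. Finally `F_μ - F_ν` vanishes off `[-M, M]`, so its
integral is at most `2M sup |F_μ - F_ν|`.
-/

open MeasureTheory ProbabilityTheory Set

/-- Generalized quantile function of a measure on ℝ. -/
noncomputable def quantile (μ : Measure ℝ) (u : ℝ) : ℝ :=
  sInf {x : ℝ | u ≤ cdf μ x}

/-- Squared Wasserstein-2 distance between measures on ℝ, via the quantile representation. -/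
noncomputable def W2sq (μ ν : Measure ℝ) : ℝ :=
  ∫ u in Ioo (0:ℝ) 1, (quantile μ u - quantile ν u) ^ 2

open Filter Topology
open scoped symmDiff

section Intervals
variable {α : Type*} [LinearOrder α] {a b : α}

lemma Ici_symmDiff_Ici : Ici a ∆ Ici b = Ico (min a b) (max a b) := by
  ext x
  simp only [mem_symmDiff, mem_Ici, mem_Ico, min_le_iff, lt_max_iff, not_le]
  grind

lemma Iic_symmDiff_Iic : Iic a ∆ Iic b = Ioc (min a b) (max a b) := by
  ext x
  simp only [mem_symmDiff, mem_Iic, mem_Ioc, min_lt_iff, le_max_iff, not_le]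
  grind

end Intervals

lemma volume_Ici_symmDiff_Ici (a b : ℝ) : volume (Ici a ∆ Ici b) = ENNReal.ofReal |a - b| := by
  rw [Ici_symmDiff_Ici, Real.volume_Ico, max_sub_min_eq_abs']

lemma volume_Iic_symmDiff_Iic (a b : ℝ) : volume (Iic a ∆ Iic b) = ENNReal.ofReal |a - b| := by
  rw [Iic_symmDiff_Iic, Real.volume_Ioc, max_sub_min_eq_abs']

section Quantile
variable {μ : Measure ℝ} {u x : ℝ}

lemma bddBelow_setOf_le_cdf (hu : 0 < u) : BddBelow {x | u ≤ cdf μ x} := by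
  obtain ⟨x₀, hx₀⟩ := eventually_atBot.mp ((tendsto_cdf_atBot μ).eventually (gt_mem_nhds hu))
  exact ⟨x₀, fun x hx ↦ le_of_not_ge fun hxx₀ ↦ (hx₀ x hxx₀).not_ge hx⟩

lemma nonempty_setOf_le_cdf (hu : u < 1) : {x | u ≤ cdf μ x}.Nonempty :=
  (((tendsto_cdf_atTop μ).eventually (lt_mem_nhds hu)).exists).imp fun _ ↦ le_of_lt

lemma le_cdf_quantile (hu : u ∈ Ioo 0 1) : u ≤ cdf μ (quantile μ u) := by
  have hright : Tendsto (cdf μ) (𝓝[>] quantile μ u) (𝓝 (cdf μ (quantile μ u))) :=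
    ((cdf μ).right_continuous _).mono Ioi_subset_Ici_self
  refine ge_of_tendsto hright (eventually_nhdsWithin_of_forall fun x hx ↦ ?_)
  obtain ⟨y, hy, hyx⟩ := exists_lt_of_csInf_lt (nonempty_setOf_le_cdf hu.2) hx
  exact hy.trans (monotone_cdf μ hyx.le)

lemma quantile_le_iff (hu : u ∈ Ioo 0 1) : quantile μ u ≤ x ↔ u ≤ cdf μ x :=
  ⟨fun h ↦ (le_cdf_quantile hu).trans (monotone_cdf μ h),
    fun h ↦ csInf_le (bddBelow_setOf_le_cdf hu.1) h⟩

lemma monotoneOn_quantile : MonotoneOn (quantile μ) (Ioo 0 1) := fun _ hu _ hv huv ↦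
  csInf_le_csInf (bddBelow_setOf_le_cdf hu.1) (nonempty_setOf_le_cdf hv.2) fun _ hx ↦ huv.trans hx

end Quantile

lemma aemeasurable_quantile_sub (μ ν : Measure ℝ) :
    AEMeasurable (fun u ↦ quantile μ u - quantile ν u) (volume.restrict (Ioo 0 1)) :=
  (aemeasurable_restrict_of_monotoneOn measurableSet_Ioo monotoneOn_quantile).sub
    (aemeasurable_restrict_of_monotoneOn measurableSet_Ioo monotoneOn_quantile)

section Tonelli
variable (μ ν : Measure ℝ)

lemma measurableSet_setOf_fst_le_cdf : MeasurableSet {p : ℝ × ℝ | p.1 ≤ cdf μ p.2} :=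
  measurableSet_le measurable_fst ((monotone_cdf μ).measurable.comp measurable_snd)

lemma lintegral_abs_quantile_sub_eq_lintegral_abs_cdf_sub :
    ∫⁻ u in Ioo 0 1, ENNReal.ofReal |quantile μ u - quantile ν u| =
      ∫⁻ x, ENNReal.ofReal |cdf μ x - cdf ν x| := by
  set A : Set (ℝ × ℝ) := Ioo 0 1 ×ˢ univ ∩ ({p | p.1 ≤ cdf μ p.2} ∆ {p | p.1 ≤ cdf ν p.2})
  have hA : MeasurableSet A := (measurableSet_Ioo.prod MeasurableSet.univ).inter
    ((measurableSet_setOf_fst_le_cdf μ).symmDiff (measurableSet_setOf_fst_le_cdf ν))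
  have horizontal (u : ℝ) : volume (Prod.mk u ⁻¹' A) =
      (Ioo 0 1).indicator (fun u ↦ ENNReal.ofReal |quantile μ u - quantile ν u|) u := by
    by_cases hu : u ∈ Ioo (0:ℝ) 1
    · have : Prod.mk u ⁻¹' A = Ici (quantile μ u) ∆ Ici (quantile ν u) := by
        ext x; simp [A, hu, mem_symmDiff, quantile_le_iff hu]
      rw [indicator_of_mem hu, this, volume_Ici_symmDiff_Ici]
    · have : Prod.mk u ⁻¹' A = ∅ := by ext x; simp [A, hu]
      rw [indicator_of_notMem hu, this, measure_empty]
  have vertical (x : ℝ) : volume ((·, x) ⁻¹' A) = ENNReal.ofReal |cdf μ x - cdf ν x| := by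
    have hsub : Iic (cdf μ x) ∆ Iic (cdf ν x) ⊆ Icc 0 1 := by
      rw [Iic_symmDiff_Iic]
      exact Ioc_subset_Icc_self.trans (Icc_subset_Icc (le_min (cdf_nonneg μ x) (cdf_nonneg ν x))
        (max_le (cdf_le_one μ x) (cdf_le_one ν x)))
    calc volume ((·, x) ⁻¹' A) = volume (Ioo 0 1 ∩ (Iic (cdf μ x) ∆ Iic (cdf ν x))) := by
          congr 1; ext u; simp [A, mem_symmDiff]
      _ = volume (Icc 0 1 ∩ (Iic (cdf μ x) ∆ Iic (cdf ν x))) :=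
          measure_congr (Ioo_ae_eq_Icc.inter (ae_eq_refl _))
      _ = ENNReal.ofReal |cdf μ x - cdf ν x| := by
          rw [inter_eq_right.mpr hsub, volume_Iic_symmDiff_Iic]
  calc _ = ∫⁻ u, volume (Prod.mk u ⁻¹' A) := by
        simp_rw [horizontal, lintegral_indicator measurableSet_Ioo]
    _ = volume.prod volume A := (Measure.prod_apply hA).symm
    _ = ∫⁻ x, volume ((·, x) ⁻¹' A) := Measure.prod_apply_symm hA
    _ = _ := by simp_rw [vertical]

/-- Also true when the integrals diverge: both sides then take the junk value `0`. -/
lemma integral_abs_quantile_sub_eq_integral_abs_cdf_sub :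
    ∫ u in Ioo 0 1, |quantile μ u - quantile ν u| = ∫ x, |cdf μ x - cdf ν x| := by
  have hF : Measurable (fun x ↦ cdf μ x - cdf ν x) :=
    (monotone_cdf μ).measurable.sub (monotone_cdf ν).measurable
  rw [integral_eq_lintegral_of_nonneg_ae (ae_of_all _ fun _ ↦ abs_nonneg _)
      (aemeasurable_quantile_sub μ ν).abs.aestronglyMeasurable,
    integral_eq_lintegral_of_nonneg_ae (ae_of_all _ fun _ ↦ abs_nonneg _)
      hF.abs.aestronglyMeasurable,
    lintegral_abs_quantile_sub_eq_lintegral_abs_cdf_sub]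

lemma abs_cdf_sub_le_iSup (t : ℝ) : |cdf μ t - cdf ν t| ≤ ⨆ s, |cdf μ s - cdf ν s| := by
  refine le_ciSup (f := fun s ↦ |cdf μ s - cdf ν s|) ⟨1, ?_⟩ t
  rintro _ ⟨s, rfl⟩
  exact Real.dist_le_of_mem_Icc_01 ⟨cdf_nonneg μ s, cdf_le_one μ s⟩ ⟨cdf_nonneg ν s, cdf_le_one ν s⟩

end Tonelli

section BoundedSupport
variable {μ ν : Measure ℝ} [IsProbabilityMeasure μ] [IsProbabilityMeasure ν] {a b u x : ℝ}

lemma le_of_measure_compl_Icc_eq_zero (h : μ (Icc a b)ᶜ = 0) : a ≤ b := by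
  have : μ (Icc a b) ≠ 0 := by simp [prob_compl_eq_zero_iff measurableSet_Icc |>.mp h]
  exact nonempty_Icc.mp (nonempty_of_measure_ne_zero this)

lemma cdf_eq_zero_of_lt (h : μ (Icc a b)ᶜ = 0) (hx : x < a) : cdf μ x = 0 := by
  have hsub : Iic x ⊆ (Icc a b)ᶜ := fun _ hy hy' ↦ (mem_Iic.mp hy |>.trans_lt hx).not_ge hy'.1
  have : μ (Iic x) = 0 := measure_mono_null hsub h
  rw [cdf_eq_real, measureReal_def, this, ENNReal.toReal_zero]

lemma cdf_eq_one_of_le (h : μ (Icc a b)ᶜ = 0) (hx : b ≤ x) : cdf μ x = 1 := by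
  have : μ (Iic x) = 1 := by
    rw [← prob_compl_eq_zero_iff measurableSet_Iic]
    exact measure_mono_null
      (compl_subset_compl.mpr (Icc_subset_Iic_self.trans (Iic_subset_Iic.mpr hx))) h
  rw [cdf_eq_real, measureReal_def, this, ENNReal.toReal_one]

lemma quantile_mem_Icc (h : μ (Icc a b)ᶜ = 0) (hu : u ∈ Ioo 0 1) : quantile μ u ∈ Icc a b := by
  refine ⟨le_of_not_gt fun hlt ↦ ?_, (quantile_le_iff hu).mpr ?_⟩
  · have := le_cdf_quantile (μ := μ) hu
    rw [cdf_eq_zero_of_lt h hlt] at this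
    exact hu.1.not_ge this
  · rw [cdf_eq_one_of_le h le_rfl]
    exact hu.2.le

lemma integral_abs_cdf_sub_le (hμ : μ (Icc a b)ᶜ = 0) (hν : ν (Icc a b)ᶜ = 0) :
    ∫ x, |cdf μ x - cdf ν x| ≤ (b - a) * ⨆ t, |cdf μ t - cdf ν t| := by
  have hzero : ∀ x ∉ Icc a b, |cdf μ x - cdf ν x| = 0 := by
    intro x hx
    rcases not_and_or.mp hx with hx | hx
    · rw [cdf_eq_zero_of_lt hμ (not_le.mp hx), cdf_eq_zero_of_lt hν (not_le.mp hx), sub_self,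
        abs_zero]
    · rw [cdf_eq_one_of_le hμ (not_le.mp hx).le, cdf_eq_one_of_le hν (not_le.mp hx).le, sub_self,
        abs_zero]
  rw [← setIntegral_eq_integral_of_forall_compl_eq_zero hzero,
    mul_comm, ← Real.volume_real_Icc_of_le (le_of_measure_compl_Icc_eq_zero hμ)]
  refine (Real.le_norm_self _).trans (norm_setIntegral_le_of_norm_le_const measure_Icc_lt_top ?_)
  intro x _
  rw [Real.norm_eq_abs, abs_abs]
  exact abs_cdf_sub_le_iSup μ ν x

lemma W2sq_le_mul_integral_abs_quantile_sub (hμ : μ (Icc a b)ᶜ = 0) (hν : ν (Icc a b)ᶜ = 0) :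
    W2sq μ ν ≤ (b - a) * ∫ u in Ioo 0 1, |quantile μ u - quantile ν u| := by
  have hdist : ∀ u ∈ Ioo (0:ℝ) 1, |quantile μ u - quantile ν u| ≤ b - a := fun u hu ↦
    Real.dist_le_of_mem_Icc (quantile_mem_Icc hμ hu) (quantile_mem_Icc hν hu)
  have hint : IntegrableOn (fun u ↦ |quantile μ u - quantile ν u|) (Ioo 0 1) :=
    Integrable.of_bound (aemeasurable_quantile_sub μ ν).abs.aestronglyMeasurable (b - a)
      ((ae_restrict_iff' measurableSet_Ioo).mpr (ae_of_all _ fun u hu ↦ by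
        rw [Real.norm_eq_abs, abs_abs]; exact hdist u hu))
  rw [W2sq, ← integral_const_mul]
  refine integral_mono_of_nonneg (ae_of_all _ fun _ ↦ sq_nonneg _) (hint.const_mul _) ?_
  filter_upwards [ae_restrict_mem measurableSet_Ioo] with u hu
  rw [← sq_abs, sq]
  exact mul_le_mul_of_nonneg_right (hdist u hu) (abs_nonneg _)

end BoundedSupport

/-- If `μ` and `ν` are probability measures supported in an interval of length `2M`, then
`W₂²(μ, ν) ≤ 4 M² ⋅ sup_t |F_μ(t) − F_ν(t)|`. -/
theorem W2sq_le_kolmogorov (M : ℝ) (μ ν : Measure ℝ)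
    [IsProbabilityMeasure μ] [IsProbabilityMeasure ν]
    (hμ : μ (Icc (-M) M)ᶜ = 0) (hν : ν (Icc (-M) M)ᶜ = 0) :
    W2sq μ ν ≤ 4 * M ^ 2 * ⨆ t : ℝ, |cdf μ t - cdf ν t| := by
  have hM : -M ≤ M := le_of_measure_compl_Icc_eq_zero hμ
  calc W2sq μ ν ≤ (M - -M) * ∫ u in Ioo 0 1, |quantile μ u - quantile ν u| :=
        W2sq_le_mul_integral_abs_quantile_sub hμ hν
    _ = (M - -M) * ∫ x, |cdf μ x - cdf ν x| := by
        rw [integral_abs_quantile_sub_eq_integral_abs_cdf_sub]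
    _ ≤ (M - -M) * ((M - -M) * ⨆ t, |cdf μ t - cdf ν t|) :=
        mul_le_mul_of_nonneg_left (integral_abs_cdf_sub_le hμ hν) (by linarith)
    _ = 4 * M ^ 2 * ⨆ t, |cdf μ t - cdf ν t| := by ring
end

section
/- Let (M, d) be a metric space satisfying the barycenter property. Fix a weight vector w ∈ Δ^{K−1}, points a = (a₁,…,a_K) ∈ M^K, and a barycenter C of a with weights w. Fix α ∈ [0,1] and suppose b = (b₁,…,b_K) ∈ M^K satisfies: (P1) d(a_s, C) = d(a_s, b_s) + d(b_s, C) for all s, and (P2) d(b_s, a_s) = (1 − √α) · d(a_s, C) for all s. Then b minimizes ∑_{s=1}^K w_s d²(b_s, a_s) over all tuples b' ∈ M^K subject to the constraint ∑_{s=1}^K w_s d²(b'_s, C_{b'}) ≤ α ∑_{s=1}^K w_s d²(a_s, C), where C_{b'} denotes a barycenter of b' with weights w. -/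
open Finset

/-- `C` is a barycenter of the tuple `a` with weights `w` in the metric space `M`. -/
def IsBarycenter {M : Type*} [MetricSpace M] {K : ℕ} (w : Fin K → ℝ)
    (a : Fin K → M) (C : M) : Prop :=
  ∀ C' : M, ∑ s, w s * dist (a s) C ^ 2 ≤ ∑ s, w s * dist (a s) C' ^ 2

/-- Abstract geometric lemma (Assouad-style geodesic relaxation): if `b` lies on the
geodesics from `a_s` to a barycenter `C` of `a` at relative position `1 − √α`, then `b` is
feasible for the `α`-relaxed constraint and minimizes `∑ w_s d²(b_s, a_s)` among all feasible
tuples. -/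
theorem abstract_geometric_lemma {M : Type*} [MetricSpace M] {K : ℕ}
    (w : Fin K → ℝ) (hw : ∀ s, 0 ≤ w s) (hw1 : ∑ s, w s = 1)
    (hbary : ∀ c : Fin K → M, ∃ C : M, IsBarycenter w c C)
    (a : Fin K → M) (C : M) (hC : IsBarycenter w a C)
    (α : ℝ) (hα : α ∈ Set.Icc (0:ℝ) 1)
    (b : Fin K → M)
    (hP1 : ∀ s, dist (a s) C = dist (a s) (b s) + dist (b s) C)
    (hP2 : ∀ s, dist (b s) (a s) = (1 - Real.sqrt α) * dist (a s) C) :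
    (∀ Cb : M, IsBarycenter w b Cb →
      ∑ s, w s * dist (b s) Cb ^ 2 ≤ α * ∑ s, w s * dist (a s) C ^ 2) ∧
    (∀ (b' : Fin K → M) (Cb' : M), IsBarycenter w b' Cb' →
      (∑ s, w s * dist (b' s) Cb' ^ 2 ≤ α * ∑ s, w s * dist (a s) C ^ 2) →
      ∑ s, w s * dist (b s) (a s) ^ 2 ≤ ∑ s, w s * dist (b' s) (a s) ^ 2) := by
  obtain ⟨hα0, hα1⟩ := hα
  set V := ∑ s, w s * dist (a s) C ^ 2 with hVdef
  have hVnn : 0 ≤ V := Finset.sum_nonneg fun s _ => mul_nonneg (hw s) (sq_nonneg _)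
  have hsα0 : 0 ≤ Real.sqrt α := Real.sqrt_nonneg α
  have hsα1 : Real.sqrt α ≤ 1 := by
    rw [show (1:ℝ) = Real.sqrt 1 by simp]
    exact Real.sqrt_le_sqrt hα1
  have hsαsq : Real.sqrt α ^ 2 = α := Real.sq_sqrt hα0
  have hbC : ∀ s, dist (b s) C = Real.sqrt α * dist (a s) C := by
    intro s
    have h1 := hP1 s
    have h2 := hP2 s
    rw [dist_comm (b s) (a s)] at h2
    linarith
  -- value of the objective at b
  have hbobj : ∑ s, w s * dist (b s) (a s) ^ 2 = (1 - Real.sqrt α) ^ 2 * V := by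
    rw [hVdef, Finset.mul_sum]
    apply Finset.sum_congr rfl
    intro s _
    rw [hP2 s]
    ring
  constructor
  · intro Cb hCb
    calc ∑ s, w s * dist (b s) Cb ^ 2 ≤ ∑ s, w s * dist (b s) C ^ 2 := hCb C
      _ = α * V := by
          rw [hVdef, Finset.mul_sum]
          apply Finset.sum_congr rfl
          intro s _
          rw [hbC s, mul_pow, hsαsq]
          ring
  · intro b' Cb' hCb' hfeas
    set X := ∑ s, w s * dist (b' s) (a s) ^ 2 with hXdef
    set B := ∑ s, w s * dist (b' s) Cb' ^ 2 with hBdef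
    have hXnn : 0 ≤ X := Finset.sum_nonneg fun s _ => mul_nonneg (hw s) (sq_nonneg _)
    have hBnn : 0 ≤ B := Finset.sum_nonneg fun s _ => mul_nonneg (hw s) (sq_nonneg _)
    -- Cauchy-Schwarz: S := ∑ w x y ≤ √X √B
    set S := ∑ s, w s * (dist (b' s) (a s) * dist (b' s) Cb') with hSdef
    have hSnn : 0 ≤ S := Finset.sum_nonneg fun s _ =>
      mul_nonneg (hw s) (mul_nonneg dist_nonneg dist_nonneg)
    have hCS : S ^ 2 ≤ X * B := by
      have key := Finset.sum_mul_sq_le_sq_mul_sq (Finset.univ : Finset (Fin K))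
        (fun s => Real.sqrt (w s) * dist (b' s) (a s))
        (fun s => Real.sqrt (w s) * dist (b' s) Cb')
      have e1 : ∑ s, (Real.sqrt (w s) * dist (b' s) (a s)) *
          (Real.sqrt (w s) * dist (b' s) Cb') = S := by
        apply Finset.sum_congr rfl
        intro s _
        rw [show (Real.sqrt (w s) * dist (b' s) (a s)) * (Real.sqrt (w s) * dist (b' s) Cb')
            = (Real.sqrt (w s) * Real.sqrt (w s)) * (dist (b' s) (a s) * dist (b' s) Cb') by ring,
          Real.mul_self_sqrt (hw s)]
      have e2 : ∑ s, (Real.sqrt (w s) * dist (b' s) (a s)) ^ 2 = X := by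
        apply Finset.sum_congr rfl
        intro s _
        rw [mul_pow, Real.sq_sqrt (hw s)]
      have e3 : ∑ s, (Real.sqrt (w s) * dist (b' s) Cb') ^ 2 = B := by
        apply Finset.sum_congr rfl
        intro s _
        rw [mul_pow, Real.sq_sqrt (hw s)]
      calc S ^ 2 = (∑ s, (Real.sqrt (w s) * dist (b' s) (a s)) *
            (Real.sqrt (w s) * dist (b' s) Cb')) ^ 2 := by rw [e1]
        _ ≤ (∑ s, (Real.sqrt (w s) * dist (b' s) (a s)) ^ 2) *
            (∑ s, (Real.sqrt (w s) * dist (b' s) Cb') ^ 2) := key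
        _ = X * B := by rw [e2, e3]
    have hSle : S ≤ Real.sqrt X * Real.sqrt B := by
      have : S = Real.sqrt (S ^ 2) := (Real.sqrt_sq hSnn).symm
      rw [this, ← Real.sqrt_mul hXnn]
      exact Real.sqrt_le_sqrt hCS
    -- V ≤ (√X + √B)^2
    have hVle : V ≤ (Real.sqrt X + Real.sqrt B) ^ 2 := by
      have step1 : V ≤ ∑ s, w s * dist (a s) Cb' ^ 2 := hC Cb'
      have step2 : ∑ s, w s * dist (a s) Cb' ^ 2 ≤ X + 2 * S + B := by
        calc ∑ s, w s * dist (a s) Cb' ^ 2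
            ≤ ∑ s, w s * (dist (b' s) (a s) + dist (b' s) Cb') ^ 2 := by
              apply Finset.sum_le_sum
              intro s _
              apply mul_le_mul_of_nonneg_left _ (hw s)
              have htri : dist (a s) Cb' ≤ dist (b' s) (a s) + dist (b' s) Cb' := by
                rw [dist_comm (b' s) (a s)]
                exact dist_triangle _ _ _
              exact pow_le_pow_left₀ dist_nonneg htri 2
          _ = X + 2 * S + B := by
              rw [hXdef, hSdef, hBdef, Finset.mul_sum, ← Finset.sum_add_distrib,
                ← Finset.sum_add_distrib]
              apply Finset.sum_congr rfl
              intro s _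
              ring
      have sq : (Real.sqrt X + Real.sqrt B) ^ 2 = X + 2 * (Real.sqrt X * Real.sqrt B) + B := by
        rw [add_sq, Real.sq_sqrt hXnn, Real.sq_sqrt hBnn]
        ring
      linarith
    have hsqX : 0 ≤ Real.sqrt X := Real.sqrt_nonneg X
    have hsqB : 0 ≤ Real.sqrt B := Real.sqrt_nonneg B
    have hVroot : Real.sqrt V ≤ Real.sqrt X + Real.sqrt B := by
      have := Real.sqrt_le_sqrt hVle
      rwa [Real.sqrt_sq (by positivity)] at this
    have hBle : Real.sqrt B ≤ Real.sqrt α * Real.sqrt V := by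
      rw [← Real.sqrt_mul hα0]
      exact Real.sqrt_le_sqrt hfeas
    have hmain : (1 - Real.sqrt α) * Real.sqrt V ≤ Real.sqrt X := by nlinarith
    rw [hbobj]
    have hVs : Real.sqrt V ^ 2 = V := Real.sq_sqrt hVnn
    have hXs : Real.sqrt X ^ 2 = X := Real.sq_sqrt hXnn
    have hnn : 0 ≤ (1 - Real.sqrt α) * Real.sqrt V :=
      mul_nonneg (by linarith) (Real.sqrt_nonneg V)
    have hsq := mul_self_le_mul_self hnn hmain
    nlinarith [hsq, hVs, hXs]
end
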